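/- The group 𝔖• = G(A,S) is generated by the families {a_i : i ≥ 1} and {s_i : i ≥ 1}, where a_i = A_{1^{i−1}} and s_i = S_{1^{i−1}}, and the relations R_as completed with the torsion relations s_i² = 1 make a presentation of 𝔖• in terms of these generators: the canonical homomorphism from the group presented by generators {a_i, s_i : i ≥ 1} and the relations R_as together with s_i² = 1 to 𝔖• is an isomorphism. -/

import Mathlib

/-- Coloured trees: finite rooted binary trees whose leaves are labelled by
positive integers. -/
inductive CTree : Type
  | leaf : ℕ+ → CTree
  | node : CTree → CTree → CTree

/-- Partial maps on coloured trees, as a monoid under reversed composition: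
`(f * g) t = (f t).bind g`, i.e. `f * g` means "`f` then `g`". -/
abbrev PMap : Type := CTree → Option CTree

instance : Monoid PMap where
  one := fun t => some t
  mul f g := fun t => (f t).bind g
  mul_assoc f g h := by
    funext t
    show ((f t).bind g).bind h = (f t).bind fun u => (g u).bind h
    cases f t <;> rfl
  one_mul f := rfl
  mul_one f := by
    funext t
    show (f t).bind some = f t
    cases f t <;> rfl

/-- The associativity operator `A`: maps `t₁·(t₂·t₃)` to `(t₁·t₂)·t₃`. -/
def opA : PMap
  | .node t₁ (.node t₂ t₃) => some (.node (.node t₁ t₂) t₃)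
  | _ => none

/-- The inverse partial map of `A`: maps `(t₁·t₂)·t₃` to `t₁·(t₂·t₃)`. -/
def opAi : PMap
  | .node (.node t₁ t₂) t₃ => some (.node t₁ (.node t₂ t₃))
  | _ => none

/-- The commutativity operator `C`: maps `t₁·t₂` to `t₂·t₁` (its own inverse
as a partial map). -/
def opC : PMap
  | .node t₁ t₂ => some (.node t₂ t₁)
  | _ => none

/-- The semi-commutativity operator `S`: maps `t₁·(t₂·t₃)` to `t₂·(t₁·t₃)`
(its own inverse as a partial map). -/
def opS : PMap
  | .node t₁ (.node t₂ t₃) => some (.node t₂ (.node t₁ t₃))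
  | _ => none

/-- Addresses: finite words over `{0,1}`, with `false` = 0 (left) and `true` = 1
(right). -/
abbrev Addr := List Bool

/-- `applyAt α f` is the shifted operator `∂_α f`, applying `f` to the
`α`-subtree of its argument. -/
def applyAt : Addr → PMap → PMap
  | [], f => f
  | false :: α, f => fun t => match t with
      | .node t₁ t₂ => (applyAt α f t₁).map (fun s => .node s t₂)
      | _ => none
  | true :: α, f => fun t => match t with
      | .node t₁ t₂ => (applyAt α f t₂).map (fun s => .node t₁ s)
      | _ => none

/-- Two partial maps are near-equal if they are both defined on at least one common
element, and they agree wherever both are defined. -/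
def NearEq (f g : PMap) : Prop :=
  (∃ t, (f t).isSome ∧ (g t).isSome) ∧
  ∀ t, (f t).isSome → (g t).isSome → f t = g t

/-- The generators of the geometry monoid `𝒢(A,S)`: the operators `A_α`, `S_α`
and their inverse partial maps (`S_α` is its own inverse). -/
def genAS : Set PMap :=
  {f | ∃ α : Addr, f = applyAt α opA ∨ f = applyAt α opAi ∨ f = applyAt α opS}

/-- The geometry monoid `𝒢(A,S)` of associativity and semi-commutativity. -/
def GeoAS : Submonoid PMap := Submonoid.closure genAS

/-- The operator `a_{n+1} = A_{1^n}` (index `n : ℕ` stands for subscript `n+1`). -/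
def opa (n : ℕ) : PMap := applyAt (List.replicate n true) opA

/-- The operator `s_{n+1} = S_{1^n}`. -/
def ops (n : ℕ) : PMap := applyAt (List.replicate n true) opS

theorem mema (n : ℕ) : opa n ∈ GeoAS :=
  Submonoid.subset_closure ⟨List.replicate n true, Or.inl rfl⟩

theorem mems (n : ℕ) : ops n ∈ GeoAS :=
  Submonoid.subset_closure ⟨List.replicate n true, Or.inr (Or.inr rfl)⟩

/-- Formal generators `a_{n+1}`, `s_{n+1}` (index `n : ℕ` stands for subscript `n+1`). -/
inductive GenAs : Type
  | a : ℕ → GenAs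
  | s : ℕ → GenAs

def fa (n : ℕ) : FreeGroup GenAs := FreeGroup.of (GenAs.a n)
def fs (n : ℕ) : FreeGroup GenAs := FreeGroup.of (GenAs.s n)

/-- `fx b n` is `a` for `b = false` and `s` for `b = true`. -/
def fx : Bool → ℕ → FreeGroup GenAs
  | false, n => fa n
  | true, n => fs n

/-- The relations `R_as` together with the torsion relations `s_i² = 1`, as
relators (index `n` stands for subscript `i = n+1`, and `j = i+2+k`):
`a_i·x_{j-1} = x_j·a_i` and `s_i·x_j = x_j·s_i` for `j ≥ i+2`, `x ∈ {a,s}`;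
`s_i·s_{i+1}·s_i = s_{i+1}·s_i·s_{i+1}`; `s_{i+1}·s_i·a_{i+1} = a_i·s_i`;
`s_i·s_{i+1}·a_i = a_{i+1}·s_i`; and `s_i² = 1`. -/
def relsas : Set (FreeGroup GenAs) :=
  {x | (∃ (b : Bool) (n k : ℕ),
      x = fa n * fx b (n + 1 + k) * (fx b (n + 2 + k) * fa n)⁻¹) ∨
    (∃ (b : Bool) (n k : ℕ),
      x = fs n * fx b (n + 2 + k) * (fx b (n + 2 + k) * fs n)⁻¹) ∨
    (∃ n : ℕ, x = fs n * fs (n + 1) * fs n * (fs (n + 1) * fs n * fs (n + 1))⁻¹) ∨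
    (∃ n : ℕ, x = fs (n + 1) * fs n * fa (n + 1) * (fa n * fs n)⁻¹) ∨
    (∃ n : ℕ, x = fs n * fs (n + 1) * fa n * (fa (n + 1) * fs n)⁻¹) ∨
    (∃ n : ℕ, x = fs n * fs n)}

/-!
Every operator `A_α`, `S_α` is conjugate, by associativity moves at the root, to operators at
comb addresses `1^n`: `A_{00β} = A⁻¹ A_{0β} A`, `A_{01β} = A⁻¹ A_{10β} A`, and `A_0`, `S_0` are
explicit words in `A`, `A_1`, `S`, `S_1` and their inverses. Inverse partial maps become inverse
group elements because every element of `𝒢(A,S)` is defined on all sufficiently deep complete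
trees. This gives generation; the relations `R_as` hold as identities of partial maps, and
`s_i² ≈ 1`.

For injectivity, every element of the presented group has the form
`(a-word)⁻¹ · (s-word) · (a-word)`. If its image is trivial, evaluate on a long right comb with
distinct leaves. Associativity preserves the left-to-right order of leaves, so the `s`-word is a
trivial permutation, hence trivial by the Coxeter presentation of the symmetric group. Then both
`a`-words build the same tree, and the canonical `a`-word of that tree determines their values
modulo `a_i a_j = a_{j+1} a_i`.
-/

open CTree Equiv

@[simp] lemma PMap.mul_apply (f g : PMap) (t : CTree) : (f * g) t = (f t).bind g := rfl

@[simp] lemma PMap.one_apply (t : CTree) : (1 : PMap) t = some t := rfl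

def onLeft (f : PMap) : PMap := applyAt [false] f

def onRight (f : PMap) : PMap := applyAt [true] f

@[simp] lemma onLeft_leaf (f : PMap) (n : ℕ+) : onLeft f (leaf n) = none := rfl

@[simp] lemma onLeft_node (f : PMap) (t₁ t₂ : CTree) :
    onLeft f (node t₁ t₂) = (f t₁).map (node · t₂) := rfl

@[simp] lemma onRight_leaf (f : PMap) (n : ℕ+) : onRight f (leaf n) = none := rfl

@[simp] lemma onRight_node (f : PMap) (t₁ t₂ : CTree) :
    onRight f (node t₁ t₂) = (f t₂).map (node t₁ ·) := rfl

lemma applyAt_false_cons (α : Addr) (f : PMap) :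
    applyAt (false :: α) f = onLeft (applyAt α f) := rfl

lemma applyAt_true_cons (α : Addr) (f : PMap) :
    applyAt (true :: α) f = onRight (applyAt α f) := rfl

lemma onRight_mul (f g : PMap) : onRight (f * g) = onRight f * onRight g := by
  funext t
  rcases t with _ | ⟨t₁, t₂⟩
  · rfl
  · cases h : f t₂ <;> simp [h]

lemma applyAt_replicate_succ (n : ℕ) (f : PMap) :
    applyAt (List.replicate (n + 1) true) f = onRight (applyAt (List.replicate n true) f) := rfl

lemma opa_succ (n : ℕ) : opa (n + 1) = onRight (opa n) := rfl

lemma ops_succ (n : ℕ) : ops (n + 1) = onRight (ops n) := rfl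

section Relations

lemma opA_mul_onRight (g : PMap) : opA * onRight g = onRight (onRight g) * opA := by
  funext t
  rcases t with _ | ⟨t₁, _ | ⟨t₂, t₃⟩⟩ <;> try rfl
  cases h : g t₃ <;> simp [opA, h]

lemma opS_mul_onRight_onRight (g : PMap) :
    opS * onRight (onRight g) = onRight (onRight g) * opS := by
  funext t
  rcases t with _ | ⟨t₁, _ | ⟨t₂, t₃⟩⟩ <;> try rfl
  cases h : g t₃ <;> simp [opS, h]

lemma opS_braid : opS * onRight opS * opS = onRight opS * opS * onRight opS := by
  funext t
  rcases t with _ | ⟨t₁, _ | ⟨t₂, _ | ⟨t₃, t₄⟩⟩⟩ <;> rfl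

lemma onRight_opS_mul_opS_mul_onRight_opA :
    onRight opS * opS * onRight opA = opA * opS := by
  funext t
  rcases t with _ | ⟨t₁, _ | ⟨t₂, _ | ⟨t₃, t₄⟩⟩⟩ <;> rfl

lemma opS_mul_onRight_opS_mul_opA : opS * onRight opS * opA = onRight opA * opS := by
  funext t
  rcases t with _ | ⟨t₁, _ | ⟨t₂, _ | ⟨t₃, t₄⟩⟩⟩ <;> rfl

lemma opa_mul_applyAt_replicate (g : PMap) (n k : ℕ) :
    opa n * applyAt (List.replicate (n + 1 + k) true) g
      = applyAt (List.replicate (n + 2 + k) true) g * opa n := by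
  induction n with
  | zero =>
    rw [Nat.zero_add, Nat.zero_add, Nat.add_comm 1, Nat.add_comm 2]
    exact opA_mul_onRight _
  | succ n ih =>
    rw [show n + 1 + 1 + k = n + 1 + k + 1 by omega, show n + 1 + 2 + k = n + 2 + k + 1 by omega,
      applyAt_replicate_succ, applyAt_replicate_succ, opa_succ, ← onRight_mul, ← onRight_mul, ih]

lemma ops_mul_applyAt_replicate (g : PMap) (n k : ℕ) :
    ops n * applyAt (List.replicate (n + 2 + k) true) g
      = applyAt (List.replicate (n + 2 + k) true) g * ops n := by
  induction n with
  | zero =>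
    rw [Nat.zero_add, Nat.add_comm 2]
    exact opS_mul_onRight_onRight _
  | succ n ih =>
    rw [show n + 1 + 2 + k = n + 2 + k + 1 by omega, applyAt_replicate_succ, ops_succ,
      ← onRight_mul, ← onRight_mul, ih]

lemma ops_braid (n : ℕ) : ops n * ops (n + 1) * ops n = ops (n + 1) * ops n * ops (n + 1) := by
  induction n with
  | zero => exact opS_braid
  | succ n ih =>
    simp only [ops_succ] at ih ⊢
    rw [← onRight_mul, ← onRight_mul, ← onRight_mul, ← onRight_mul, ih]

lemma ops_succ_mul_ops_mul_opa_succ (n : ℕ) :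
    ops (n + 1) * ops n * opa (n + 1) = opa n * ops n := by
  induction n with
  | zero => exact onRight_opS_mul_opS_mul_onRight_opA
  | succ n ih =>
    simp only [ops_succ, opa_succ] at ih ⊢
    rw [← onRight_mul, ← onRight_mul, ← onRight_mul, ih]

lemma ops_mul_ops_succ_mul_opa (n : ℕ) :
    ops n * ops (n + 1) * opa n = opa (n + 1) * ops n := by
  induction n with
  | zero => exact opS_mul_onRight_opS_mul_opA
  | succ n ih =>
    simp only [ops_succ, opa_succ] at ih ⊢
    rw [← onRight_mul, ← onRight_mul, ← onRight_mul, ih]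

end Relations

section PartialInverse

def PartialInv (f g : PMap) : Prop := ∀ t u, f t = some u ↔ g u = some t

lemma partialInv_opA_opAi : PartialInv opA opAi := by
  rintro (_ | ⟨t₁, _ | ⟨t₂, t₃⟩⟩) (_ | ⟨_ | ⟨u₁, u₂⟩, u₃⟩) <;>
    simp only [opA, opAi, reduceCtorEq, Option.some.injEq, node.injEq, and_false, false_and]
  tauto

lemma partialInv_opS_opS : PartialInv opS opS := by
  rintro (_ | ⟨t₁, _ | ⟨t₂, t₃⟩⟩) (_ | ⟨u₁, _ | ⟨u₂, u₃⟩⟩) <;>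
    simp only [opS, reduceCtorEq, Option.some.injEq, node.injEq, and_false]
  tauto

lemma PartialInv.onLeft {f g : PMap} (h : PartialInv f g) :
    PartialInv (onLeft f) (onLeft g) := by
  rintro (_ | ⟨t₁, t₂⟩) (_ | ⟨u₁, u₂⟩) <;>
    simp only [onLeft_leaf, onLeft_node, reduceCtorEq, Option.map_eq_some_iff, node.injEq,
      and_false, exists_false]
  simpa using and_congr (h t₁ u₁) eq_comm

lemma PartialInv.onRight {f g : PMap} (h : PartialInv f g) :
    PartialInv (onRight f) (onRight g) := by
  rintro (_ | ⟨t₁, t₂⟩) (_ | ⟨u₁, u₂⟩) <;>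
    simp only [onRight_leaf, onRight_node, reduceCtorEq, Option.map_eq_some_iff, node.injEq,
      and_false, exists_false, exists_eq_right_right]
  exact and_congr (h t₂ u₂) eq_comm

lemma PartialInv.applyAt {f g : PMap} (h : PartialInv f g) (α : Addr) :
    PartialInv (applyAt α f) (applyAt α g) := by
  induction α with
  | nil => exact h
  | cons b α ih => cases b; exacts [ih.onLeft, ih.onRight]

end PartialInverse

section Depth

def CTree.minDepth : CTree → ℕ
  | leaf _ => 0
  | node t₁ t₂ => min t₁.minDepth t₂.minDepth + 1

def fullTree : ℕ → CTree
  | 0 => leaf 1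
  | d + 1 => node (fullTree d) (fullTree d)

lemma minDepth_fullTree (d : ℕ) : (fullTree d).minDepth = d := by
  induction d with
  | zero => rfl
  | succ d ih => simp [fullTree, CTree.minDepth, ih]

def DefinedAboveDepth (f : PMap) (d : ℕ) : Prop :=
  ∀ t : CTree, d ≤ t.minDepth → ∃ u, f t = some u ∧ t.minDepth ≤ u.minDepth + d

lemma definedAboveDepth_one : DefinedAboveDepth 1 0 :=
  fun t _ => ⟨t, rfl, le_rfl⟩

lemma DefinedAboveDepth.mul {f g : PMap} {d e : ℕ} (hf : DefinedAboveDepth f d)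
    (hg : DefinedAboveDepth g e) : DefinedAboveDepth (f * g) (d + e) := by
  intro t ht
  obtain ⟨u, hu, htu⟩ := hf t (by omega)
  obtain ⟨v, hv, huv⟩ := hg u (by omega)
  exact ⟨v, by simp [hu, hv], by omega⟩

lemma DefinedAboveDepth.onLeft {f : PMap} {d : ℕ} (hf : DefinedAboveDepth f d) :
    DefinedAboveDepth (onLeft f) (d + 1) := by
  rintro (_ | ⟨t₁, t₂⟩) ht
  · simp [CTree.minDepth] at ht
  · simp only [CTree.minDepth] at ht
    obtain ⟨u, hu, htu⟩ := hf t₁ (by omega)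
    exact ⟨node u t₂, by simp [hu], by simp only [CTree.minDepth]; omega⟩

lemma DefinedAboveDepth.onRight {f : PMap} {d : ℕ} (hf : DefinedAboveDepth f d) :
    DefinedAboveDepth (onRight f) (d + 1) := by
  rintro (_ | ⟨t₁, t₂⟩) ht
  · simp [CTree.minDepth] at ht
  · simp only [CTree.minDepth] at ht
    obtain ⟨u, hu, htu⟩ := hf t₂ (by omega)
    exact ⟨node t₁ u, by simp [hu], by simp only [CTree.minDepth]; omega⟩

lemma DefinedAboveDepth.applyAt {f : PMap} {d : ℕ} (hf : DefinedAboveDepth f d) (α : Addr) :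
    DefinedAboveDepth (applyAt α f) (d + α.length) := by
  induction α with
  | nil => exact hf
  | cons b α ih => cases b; exacts [ih.onLeft, ih.onRight]

lemma definedAboveDepth_opA : DefinedAboveDepth opA 2 := by
  rintro (_ | ⟨t₁, _ | ⟨t₂, t₃⟩⟩) ht
  · simp [CTree.minDepth] at ht
  · simp [CTree.minDepth] at ht
  · exact ⟨_, rfl, by simp only [CTree.minDepth] at ht ⊢; omega⟩

lemma definedAboveDepth_opAi : DefinedAboveDepth opAi 2 := by
  rintro (_ | ⟨_ | ⟨t₁, t₂⟩, t₃⟩) ht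
  · simp [CTree.minDepth] at ht
  · simp [CTree.minDepth] at ht
  · exact ⟨_, rfl, by simp only [CTree.minDepth] at ht ⊢; omega⟩

lemma definedAboveDepth_opS : DefinedAboveDepth opS 2 := by
  rintro (_ | ⟨t₁, _ | ⟨t₂, t₃⟩⟩) ht
  · simp [CTree.minDepth] at ht
  · simp [CTree.minDepth] at ht
  · exact ⟨_, rfl, by simp only [CTree.minDepth] at ht ⊢; omega⟩

lemma exists_definedAboveDepth {f : PMap} (hf : f ∈ GeoAS) : ∃ d, DefinedAboveDepth f d := by
  induction hf using Submonoid.closure_induction with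
  | mem f hf =>
    obtain ⟨α, rfl | rfl | rfl⟩ := hf
    exacts [⟨_, definedAboveDepth_opA.applyAt α⟩, ⟨_, definedAboveDepth_opAi.applyAt α⟩,
      ⟨_, definedAboveDepth_opS.applyAt α⟩]
  | one => exact ⟨0, definedAboveDepth_one⟩
  | mul f g _ _ hf hg =>
    obtain ⟨d, hf⟩ := hf
    obtain ⟨e, hg⟩ := hg
    exact ⟨d + e, hf.mul hg⟩

lemma exists_isSome_of_mem {f : PMap} (hf : f ∈ GeoAS) : ∃ t, (f t).isSome := by
  obtain ⟨d, hd⟩ := exists_definedAboveDepth hf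
  obtain ⟨u, hu, -⟩ := hd (fullTree d) (minDepth_fullTree d).ge
  exact ⟨fullTree d, by simp [hu]⟩

end Depth

lemma nearEq_mul_one_of_partialInv {f g : PMap} (hf : f ∈ GeoAS) (hg : g ∈ GeoAS)
    (h : PartialInv f g) : NearEq (f * g) 1 := by
  refine ⟨?_, fun t hfg _ => ?_⟩
  · obtain ⟨t, ht⟩ := exists_isSome_of_mem (mul_mem hf hg)
    exact ⟨t, ht, rfl⟩
  · obtain ⟨u, hu⟩ := Option.isSome_iff_exists.1 hfg
    obtain ⟨v, hv, hvu⟩ := Option.bind_eq_some_iff.1 hu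
    rw [hu, Option.some_injective _ (hvu.symm.trans ((h t v).1 hv))]
    rfl

section CombAddresses

lemma onLeft_onLeft (g : PMap) : onLeft (onLeft g) = opAi * onLeft g * opA := by
  funext t
  rcases t with _ | ⟨_ | ⟨t₁, t₂⟩, t₃⟩ <;> try rfl
  cases h : g t₁ <;> simp [opA, opAi, h]

lemma onLeft_onRight (g : PMap) : onLeft (onRight g) = opAi * onRight (onLeft g) * opA := by
  funext t
  rcases t with _ | ⟨_ | ⟨t₁, t₂⟩, t₃⟩ <;> try rfl
  cases h : g t₂ <;> simp [opA, opAi, h]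

lemma onLeft_opA : onLeft opA = opAi * onRight opAi * opA * opA := by
  funext t
  rcases t with _ | ⟨_ | ⟨t₁, _ | ⟨t₂, t₃⟩⟩, t₄⟩ <;> rfl

lemma onLeft_opS : onLeft opS = opAi * opS * opAi * onRight opS * onRight opA * opA := by
  funext t
  rcases t with _ | ⟨_ | ⟨t₁, _ | ⟨t₂, t₃⟩⟩, t₄⟩ <;> rfl

def opai (n : ℕ) : PMap := applyAt (List.replicate n true) opAi

def combOps : Set PMap := {f | ∃ n, f = opa n ∨ f = opai n ∨ f = ops n}

/-- A semigroup rather than a monoid, so that `onRight` preserves it (`onRight 1 ≠ 1`). -/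
def combSemigroup : Subsemigroup PMap := Subsemigroup.closure combOps

lemma onRight_mem_combSemigroup {f : PMap} (hf : f ∈ combSemigroup) :
    onRight f ∈ combSemigroup := by
  induction hf using Subsemigroup.closure_induction with
  | mem f hf =>
    obtain ⟨n, rfl | rfl | rfl⟩ := hf
    all_goals exact Subsemigroup.subset_closure ⟨n + 1, by tauto⟩
  | mul f g _ _ hf hg => rw [onRight_mul]; exact mul_mem hf hg

lemma applyAt_mem_combSemigroup {h : PMap} (hh : h = opA ∨ h = opS) (α : Addr) :
    applyAt α h ∈ combSemigroup ∧ applyAt (false :: α) h ∈ combSemigroup := by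
  have mem : ∀ {f}, f ∈ combOps → f ∈ combSemigroup := fun hf => Subsemigroup.subset_closure hf
  have hA : opA ∈ combSemigroup := mem ⟨0, Or.inl rfl⟩
  have hAi : opAi ∈ combSemigroup := mem ⟨0, Or.inr (Or.inl rfl)⟩
  have hS : opS ∈ combSemigroup := mem ⟨0, Or.inr (Or.inr rfl)⟩
  have conj : ∀ {f}, f ∈ combSemigroup → opAi * f * opA ∈ combSemigroup :=
    fun hf => mul_mem (mul_mem hAi hf) hA
  -- `applyAt (false :: c :: β)` reduces to `applyAt (false :: β)`, not to `applyAt (c :: β)`.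
  induction α with
  | nil =>
    rcases hh with rfl | rfl
    · refine ⟨hA, ?_⟩
      show onLeft opA ∈ combSemigroup
      rw [onLeft_opA]
      exact mul_mem (conj (onRight_mem_combSemigroup hAi)) hA
    · refine ⟨hS, ?_⟩
      show onLeft opS ∈ combSemigroup
      rw [onLeft_opS]
      exact mul_mem (mul_mem (mul_mem (mul_mem (mul_mem hAi hS) hAi)
        (onRight_mem_combSemigroup hS)) (onRight_mem_combSemigroup hA)) hA
  | cons b α ih =>
    cases b
    · exact ⟨ih.2, by rw [applyAt_false_cons, applyAt_false_cons, onLeft_onLeft]; exact conj ih.2⟩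
    · refine ⟨onRight_mem_combSemigroup ih.1, ?_⟩
      rw [applyAt_false_cons, applyAt_true_cons, onLeft_onRight]
      exact conj (onRight_mem_combSemigroup ih.2)

end CombAddresses

section Presentation

structure RasRelations {H : Type*} [Group H] (a s : ℕ → H) : Prop where
  a_mul_a (n k : ℕ) : a n * a (n + 1 + k) = a (n + 2 + k) * a n
  a_mul_s (n k : ℕ) : a n * s (n + 1 + k) = s (n + 2 + k) * a n
  s_mul_a (n k : ℕ) : s n * a (n + 2 + k) = a (n + 2 + k) * s n
  s_mul_s (n k : ℕ) : s n * s (n + 2 + k) = s (n + 2 + k) * s n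
  braid (n : ℕ) : s n * s (n + 1) * s n = s (n + 1) * s n * s (n + 1)
  s_succ_mul_s_mul_a_succ (n : ℕ) : s (n + 1) * s n * a (n + 1) = a n * s n
  s_mul_s_succ_mul_a (n : ℕ) : s n * s (n + 1) * a n = a (n + 1) * s n
  s_mul_self (n : ℕ) : s n * s n = 1

def GenAs.value {H : Type*} (a s : ℕ → H) : GenAs → H
  | .a n => a n
  | .s n => s n

lemma forall_lift_relsas_eq_one_iff {H : Type*} [Group H] (a s : ℕ → H) :
    (∀ r ∈ relsas, FreeGroup.lift (GenAs.value a s) r = 1) ↔ RasRelations a s := by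
  have ha (n : ℕ) : FreeGroup.lift (GenAs.value a s) (fa n) = a n := FreeGroup.lift_apply_of
  have hs (n : ℕ) : FreeGroup.lift (GenAs.value a s) (fs n) = s n := FreeGroup.lift_apply_of
  simp only [relsas, Set.mem_ofPred_eq, or_imp, forall_and, forall_exists_index,
    forall_comm (α := FreeGroup GenAs), forall_eq_apply_imp_iff, Bool.forall_bool, fx, map_mul,
    map_inv, ha, hs, mul_inv_eq_one]
  constructor
  · rintro ⟨⟨h₁, h₂⟩, ⟨h₃, h₄⟩, h₅, h₆, h₇, h₈⟩
    exact ⟨h₁, h₂, h₃, h₄, h₅, h₆, h₇, h₈⟩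
  · rintro ⟨h₁, h₂, h₃, h₄, h₅, h₆, h₇, h₈⟩
    exact ⟨⟨h₁, h₂⟩, ⟨h₃, h₄⟩, h₅, h₆, h₇, h₈⟩

end Presentation

section GeometryGroup

variable {G : Type*} [Group G]

def ReflectsNearEq (q : GeoAS →* G) : Prop := ∀ f g : GeoAS, q f = q g ↔ NearEq f.1 g.1

variable {q : GeoAS →* G}

lemma ReflectsNearEq.map_eq_inv (hq : ReflectsNearEq q) {f g : PMap} (hf : f ∈ GeoAS)
    (hg : g ∈ GeoAS) (h : PartialInv f g) : q ⟨g, hg⟩ = (q ⟨f, hf⟩)⁻¹ := by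
  refine eq_inv_of_mul_eq_one_right ?_
  rw [← map_mul, ← map_one q]
  exact (hq _ 1).2 (nearEq_mul_one_of_partialInv hf hg h)

theorem ReflectsNearEq.closure_eq_top (hq : ReflectsNearEq q) (hsurj : Function.Surjective q) :
    Subgroup.closure {x : G | ∃ n, x = q ⟨opa n, mema n⟩ ∨ x = q ⟨ops n, mems n⟩} = ⊤ := by
  set H := Subgroup.closure {x : G | ∃ n, x = q ⟨opa n, mema n⟩ ∨ x = q ⟨ops n, mems n⟩}
  set K : Submonoid PMap := (H.toSubmonoid.comap q).map GeoAS.subtype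
  have mem_K {f : PMap} (hf : f ∈ GeoAS) (h : q ⟨f, hf⟩ ∈ H) : f ∈ K := ⟨⟨f, hf⟩, h, rfl⟩
  have of_mem_K {f : PMap} (hf : f ∈ K) : ∃ hf' : f ∈ GeoAS, q ⟨f, hf'⟩ ∈ H := by
    obtain ⟨x, hx, rfl⟩ := hf
    exact ⟨x.2, hx⟩
  have inv_mem_K {α : Addr} (h : applyAt α opA ∈ K) : applyAt α opAi ∈ K := by
    obtain ⟨hf, hfH⟩ := of_mem_K h
    have hg : applyAt α opAi ∈ GeoAS := Submonoid.subset_closure ⟨α, Or.inr (Or.inl rfl)⟩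
    refine mem_K hg ?_
    rw [hq.map_eq_inv hf hg (partialInv_opA_opAi.applyAt α)]
    exact inv_mem hfH
  have hcomb : combSemigroup ≤ K.toSubsemigroup := by
    have ha (n : ℕ) : opa n ∈ K := mem_K (mema n) (Subgroup.subset_closure ⟨n, Or.inl rfl⟩)
    refine Subsemigroup.closure_le.2 ?_
    rintro f ⟨n, rfl | rfl | rfl⟩
    exacts [ha n, inv_mem_K (ha n), mem_K (mems n) (Subgroup.subset_closure ⟨n, Or.inr rfl⟩)]
  have hgen : GeoAS ≤ K := by
    refine Submonoid.closure_le.2 ?_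
    rintro f ⟨α, rfl | rfl | rfl⟩
    exacts [hcomb (applyAt_mem_combSemigroup (Or.inl rfl) α).1,
      inv_mem_K (hcomb (applyAt_mem_combSemigroup (Or.inl rfl) α).1),
      hcomb (applyAt_mem_combSemigroup (Or.inr rfl) α).1]
  refine eq_top_iff.2 fun g _ => ?_
  obtain ⟨⟨f, hf⟩, rfl⟩ := hsurj g
  exact (of_mem_K (hgen hf)).2

lemma ReflectsNearEq.rasRelations (hq : ReflectsNearEq q) :
    RasRelations (fun n => q ⟨opa n, mema n⟩) (fun n => q ⟨ops n, mems n⟩) where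
  a_mul_a n k := by
    simp only [← map_mul]; exact congrArg q (Subtype.ext (opa_mul_applyAt_replicate opA n k))
  a_mul_s n k := by
    simp only [← map_mul]; exact congrArg q (Subtype.ext (opa_mul_applyAt_replicate opS n k))
  s_mul_a n k := by
    simp only [← map_mul]; exact congrArg q (Subtype.ext (ops_mul_applyAt_replicate opA n k))
  s_mul_s n k := by
    simp only [← map_mul]; exact congrArg q (Subtype.ext (ops_mul_applyAt_replicate opS n k))
  braid n := by simp only [← map_mul]; exact congrArg q (Subtype.ext (ops_braid n))
  s_succ_mul_s_mul_a_succ n := by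
    simp only [← map_mul]; exact congrArg q (Subtype.ext (ops_succ_mul_ops_mul_opa_succ n))
  s_mul_s_succ_mul_a n := by
    simp only [← map_mul]; exact congrArg q (Subtype.ext (ops_mul_ops_succ_mul_opa n))
  s_mul_self n := mul_eq_one_iff_eq_inv.2 (hq.map_eq_inv _ _ (partialInv_opS_opS.applyAt _))

def ReflectsNearEq.presentationHom (hq : ReflectsNearEq q) : PresentedGroup relsas →* G :=
  PresentedGroup.toGroup ((forall_lift_relsas_eq_one_iff _ _).2 hq.rasRelations)

lemma ReflectsNearEq.presentationHom_of_a (hq : ReflectsNearEq q) (n : ℕ) :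
    hq.presentationHom (PresentedGroup.of (GenAs.a n)) = q ⟨opa n, mema n⟩ :=
  PresentedGroup.toGroup.of _

lemma ReflectsNearEq.presentationHom_of_s (hq : ReflectsNearEq q) (n : ℕ) :
    hq.presentationHom (PresentedGroup.of (GenAs.s n)) = q ⟨ops n, mems n⟩ :=
  PresentedGroup.toGroup.of _

lemma ReflectsNearEq.presentationHom_surjective (hq : ReflectsNearEq q)
    (hsurj : Function.Surjective q) : Function.Surjective hq.presentationHom := by
  refine MonoidHom.range_eq_top.1 (eq_top_iff.2 ?_)
  rw [← hq.closure_eq_top hsurj, Subgroup.closure_le]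
  rintro x ⟨n, rfl | rfl⟩
  exacts [⟨_, hq.presentationHom_of_a n⟩, ⟨_, hq.presentationHom_of_s n⟩]

end GeometryGroup

section SymmetricGroup

def swapProd (σ : List ℕ) : Perm ℕ := (σ.map fun i => swap i (i + 1)).prod

@[simp] lemma swapProd_nil : swapProd [] = 1 := rfl

@[simp] lemma swapProd_cons (i : ℕ) (σ : List ℕ) :
    swapProd (i :: σ) = swap i (i + 1) * swapProd σ := by
  simp [swapProd]

@[simp] lemma swapProd_append (σ τ : List ℕ) : swapProd (σ ++ τ) = swapProd σ * swapProd τ := by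
  simp [swapProd]

lemma swapProd_apply_of_forall_lt {σ : List ℕ} {x : ℕ} (h : ∀ j ∈ σ, j + 1 < x) :
    swapProd σ x = x := by
  induction σ with
  | nil => rfl
  | cons j σ ih =>
    have hj := h j List.mem_cons_self
    rw [swapProd_cons, Perm.mul_apply, ih fun k hk => h k (List.mem_cons_of_mem _ hk),
      swap_apply_of_ne_of_ne (by omega) (by omega)]

def descRun (p : ℕ) : ℕ → List ℕ
  | 0 => []
  | L + 1 => (p + L) :: descRun p L

lemma mem_descRun {p L j : ℕ} (h : j ∈ descRun p L) : p ≤ j ∧ j < p + L := by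
  induction L with
  | zero => simp [descRun] at h
  | succ L ih =>
    rcases List.mem_cons.1 h with rfl | h
    · omega
    · have := ih h; omega

lemma descRun_succ' (p L : ℕ) : descRun p (L + 1) = descRun (p + 1) L ++ [p] := by
  induction L with
  | zero => simp [descRun]
  | succ L ih => rw [descRun, ih, show p + (L + 1) = p + 1 + L by omega]; rfl

def runPerm (p L : ℕ) : Perm ℕ := swapProd (descRun p L)

lemma runPerm_succ' (p L : ℕ) : runPerm p (L + 1) = runPerm (p + 1) L * swap p (p + 1) := by
  simp [runPerm, descRun_succ']

lemma runPerm_apply (p L x : ℕ) : runPerm p L x =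
    if x = p ∧ 0 < L then p + L else if p < x ∧ x ≤ p + L then x - 1 else x := by
  induction L with
  | zero => simp only [runPerm, descRun, swapProd_nil, Perm.one_apply]; split_ifs <;> omega
  | succ L ih =>
    rw [runPerm, descRun, swapProd_cons, Perm.mul_apply, ← runPerm, ih, swap_apply_def]
    split_ifs <;> omega

lemma runPerm_mul_swap_of_lt {p L i : ℕ} (h : i + 1 < p) :
    runPerm p L * swap i (i + 1) = swap i (i + 1) * runPerm p L := by
  ext x
  simp only [Perm.mul_apply, runPerm_apply, swap_apply_def]
  split_ifs <;> omega

lemma runPerm_mul_swap_of_gt {p L i : ℕ} (hp : p < i) (hi : i + 1 ≤ p + L) :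
    runPerm p L * swap i (i + 1) = swap (i - 1) i * runPerm p L := by
  ext x
  simp only [Perm.mul_apply, runPerm_apply, swap_apply_def]
  split_ifs <;> omega

/-- The last block of the Lehmer word of `π` on `{0, …, N}`: the cycle carrying `π⁻¹ N` to `N`. -/
def topCycle (N : ℕ) (π : Perm ℕ) : Perm ℕ := runPerm (π⁻¹ N) (N - π⁻¹ N)

/-- The canonical word of a permutation `π` fixing every `x ≥ N`, read off its Lehmer code. -/
def lehmerWord : ℕ → Perm ℕ → List ℕ
  | 0, _ => []
  | N + 1, π => lehmerWord N (π * (topCycle N π)⁻¹) ++ descRun (π⁻¹ N) (N - π⁻¹ N)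

lemma lehmerWord_one (N : ℕ) : lehmerWord N 1 = [] := by
  induction N with
  | zero => rfl
  | succ N ih => simp [lehmerWord, topCycle, runPerm, descRun, ih]

lemma inv_apply_le {N : ℕ} {π : Perm ℕ} (hπ : ∀ x, N + 1 ≤ x → π x = x) : π⁻¹ N ≤ N := by
  by_contra h
  have := hπ _ (by omega : N + 1 ≤ π⁻¹ N)
  rw [← Perm.mul_apply, mul_inv_cancel, Perm.one_apply] at this
  omega

lemma mul_inv_topCycle_apply {N : ℕ} {π : Perm ℕ} (hπ : ∀ x, N + 1 ≤ x → π x = x) {x : ℕ}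
    (hx : N ≤ x) : (π * (topCycle N π)⁻¹) x = x := by
  have hle := inv_apply_le hπ
  rw [Perm.mul_apply]
  rcases hx.eq_or_lt with hx | hx
  · have h : topCycle N π (π⁻¹ N) = N := by rw [topCycle, runPerm_apply]; split_ifs <;> omega
    rw [← hx, Perm.inv_eq_iff_eq.2 h.symm, ← Perm.mul_apply, mul_inv_cancel, Perm.one_apply]
  · have h : topCycle N π x = x := by rw [topCycle, runPerm_apply]; split_ifs <;> omega
    rw [Perm.inv_eq_iff_eq.2 h.symm, hπ x hx]

lemma lehmerWord_mul_swap {M i : ℕ} {π : Perm ℕ} (hπ : π⁻¹ M = i + 1) (hi : i + 1 ≤ M) :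
    lehmerWord (M + 1) (π * swap i (i + 1)) = lehmerWord (M + 1) π ++ [i] := by
  have hπ' : (π * swap i (i + 1))⁻¹ M = i := by
    rw [mul_inv_rev, swap_inv, Perm.mul_apply, hπ, swap_apply_right]
  have hL : M - i = M - (i + 1) + 1 := by omega
  have hcycle : topCycle M (π * swap i (i + 1)) = topCycle M π * swap i (i + 1) := by
    rw [topCycle, topCycle, hπ, hπ', hL, runPerm_succ']
  rw [lehmerWord, lehmerWord, hcycle, hπ', hπ, hL, descRun_succ', mul_inv_rev, swap_inv,
    mul_assoc, ← mul_assoc (swap i (i + 1)), swap_mul_self, one_mul, List.append_assoc]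

end SymmetricGroup

section CoxeterPresentation

structure CoxeterRelationsA {H : Type*} [Group H] (s : ℕ → H) : Prop where
  mul_self (n : ℕ) : s n * s n = 1
  braid (n : ℕ) : s n * s (n + 1) * s n = s (n + 1) * s n * s (n + 1)
  comm {i j : ℕ} : i + 2 ≤ j → s i * s j = s j * s i

namespace CoxeterRelationsA

variable {H : Type*} [Group H] {s : ℕ → H}

lemma prod_mul_comm (hs : CoxeterRelationsA s) {l : List ℕ} {i : ℕ}
    (h : ∀ j ∈ l, j + 2 ≤ i ∨ i + 2 ≤ j) : (l.map s).prod * s i = s i * (l.map s).prod := by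
  induction l with
  | nil => simp
  | cons j l ih =>
    have hj : s j * s i = s i * s j := by
      rcases h j List.mem_cons_self with h | h
      exacts [hs.comm h, (hs.comm h).symm]
    rw [List.map_cons, List.prod_cons, mul_assoc, ih fun k hk => h k (List.mem_cons_of_mem _ hk),
      ← mul_assoc, hj, mul_assoc]

lemma prod_descRun_mul {p L c : ℕ} (hs : CoxeterRelationsA s) (h : c + 2 ≤ L) :
    ((descRun p L).map s).prod * s (p + c + 1) = s (p + c) * ((descRun p L).map s).prod := by
  induction L with
  | zero => omega
  | succ L ih =>
    rcases Nat.lt_or_ge (c + 2) (L + 1) with hlt | hge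
    · rw [descRun, List.map_cons, List.prod_cons, mul_assoc, ih (by omega), ← mul_assoc,
        ← mul_assoc, hs.comm (by omega : p + c + 2 ≤ p + L)]
    · obtain rfl : L = c + 1 := by omega
      have hcomm := hs.prod_mul_comm (l := descRun p c) (i := p + c + 1)
        fun j hj => Or.inl (by have := mem_descRun hj; omega)
      simp only [descRun, List.map_cons, List.prod_cons, show p + (c + 1) = p + c + 1 by omega]
      calc s (p + c + 1) * (s (p + c) * ((descRun p c).map s).prod) * s (p + c + 1)
          = s (p + c + 1) * s (p + c) * s (p + c + 1) * ((descRun p c).map s).prod := by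
            rw [mul_assoc (s (p + c + 1) * s (p + c)), ← hcomm]; group
        _ = s (p + c) * (s (p + c + 1) * (s (p + c) * ((descRun p c).map s).prod)) := by
            rw [← hs.braid]; group

lemma exists_descRun_mul {M p i : ℕ} (hs : CoxeterRelationsA s) (hp : p ≤ M) (hi : i + 1 ≤ M)
    (hpi : p ≠ i) (hpi' : p ≠ i + 1) :
    ∃ j, j + 1 < M ∧ runPerm p (M - p) * swap i (i + 1) = swap j (j + 1) * runPerm p (M - p) ∧
      ((descRun p (M - p)).map s).prod * s i = s j * ((descRun p (M - p)).map s).prod := by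
  rcases Nat.lt_or_gt_of_ne hpi with hlt | hgt
  · refine ⟨i - 1, by omega, ?_, ?_⟩
    · rw [Nat.sub_add_cancel (by omega)]
      exact runPerm_mul_swap_of_gt hlt (by omega)
    · have := hs.prod_descRun_mul (p := p) (c := i - p - 1) (L := M - p) (by omega)
      rwa [show p + (i - p - 1) + 1 = i by omega, show p + (i - p - 1) = i - 1 by omega] at this
  · refine ⟨i, by omega, runPerm_mul_swap_of_lt (by omega), hs.prod_mul_comm fun j hj => ?_⟩
    have := mem_descRun hj
    omega

lemma prod_lehmerWord_mul (hs : CoxeterRelationsA s) {N : ℕ} {π : Perm ℕ}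
    (hπ : ∀ x, N ≤ x → π x = x) {i : ℕ} (hi : i + 1 < N) :
    ((lehmerWord N π).map s).prod * s i = ((lehmerWord N (π * swap i (i + 1))).map s).prod := by
  -- With `p = π⁻¹ M`: if `p = i + 1` the letter `i` extends the last block, if `p = i` it
  -- cancels against it, and otherwise `s i` passes through the last block as some `s j`.
  induction N generalizing π i with
  | zero => omega
  | succ M ih =>
    rcases eq_or_ne (π⁻¹ M) (i + 1) with hp | hp
    · simp [lehmerWord_mul_swap hp (by omega)]
    rcases eq_or_ne (π⁻¹ M) i with hp' | hp'
    · have hρ : (π * swap i (i + 1))⁻¹ M = i + 1 := by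
        rw [mul_inv_rev, swap_inv, Perm.mul_apply, hp', swap_apply_left]
      have := lehmerWord_mul_swap hρ (by omega)
      rw [mul_assoc, swap_mul_self, mul_one] at this
      simp [this, mul_assoc, hs.mul_self]
    obtain ⟨j, hj, hperm, hword⟩ := hs.exists_descRun_mul (inv_apply_le hπ) (by omega) hp' hp
    have hinv : (π * swap i (i + 1))⁻¹ M = π⁻¹ M := by
      rw [mul_inv_rev, swap_inv, Perm.mul_apply, swap_apply_of_ne_of_ne hp' hp]
    have hrest : π * (topCycle M π)⁻¹ * swap j (j + 1)
        = π * swap i (i + 1) * (topCycle M (π * swap i (i + 1)))⁻¹ := by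
      rw [topCycle, topCycle, hinv, eq_mul_inv_iff_mul_eq, mul_assoc, mul_assoc, ← hperm]
      group
    rw [lehmerWord, lehmerWord, hinv, List.map_append, List.map_append, List.prod_append,
      List.prod_append, mul_assoc, hword, ← mul_assoc,
      ih (fun x hx => mul_inv_topCycle_apply hπ hx) hj, hrest]

lemma prod_eq_prod_lehmerWord (hs : CoxeterRelationsA s) {σ : List ℕ} {N : ℕ}
    (h : ∀ j ∈ σ, j + 1 < N) : (σ.map s).prod = ((lehmerWord N (swapProd σ)).map s).prod := by
  induction σ using List.reverseRecOn with
  | nil => simp [lehmerWord_one]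
  | append_singleton σ i ih =>
    have h' : ∀ j ∈ σ, j + 1 < N := fun j hj => h j (List.mem_append_left _ hj)
    rw [List.map_append, List.prod_append, ih h', List.map_singleton, List.prod_singleton,
      hs.prod_lehmerWord_mul (fun x hx => swapProd_apply_of_forall_lt fun j hj => by
        have := h' j hj; omega) (h i (by simp)), swapProd_append]
    simp [swapProd]

theorem prod_eq_one (hs : CoxeterRelationsA s) {σ : List ℕ} (h : swapProd σ = 1) :
    (σ.map s).prod = 1 := by
  rw [hs.prod_eq_prod_lehmerWord (N := σ.sum + 2) fun j hj => by
    have := List.le_sum_of_mem hj; omega, h, lehmerWord_one, List.map_nil, List.prod_nil]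

end CoxeterRelationsA

end CoxeterPresentation

section ThompsonRelations

lemma exists_of_opA_eq_some {t t' : CTree} (h : opA t = some t') :
    ∃ t₁ t₂ t₃, t = node t₁ (node t₂ t₃) ∧ t' = node (node t₁ t₂) t₃ := by
  rcases t with _ | ⟨t₁, _ | ⟨t₂, t₃⟩⟩
  · cases h
  · cases h
  · exact ⟨t₁, t₂, t₃, rfl, (Option.some_injective _ h).symm⟩

def CTree.treeWord : CTree → ℕ → List ℕ
  | leaf _, _ => []
  | node t₁ t₂, p => t₁.treeWord p ++ t₂.treeWord (p + 1) ++ [p]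

/-- `(t.spineWord 0).map opa` is a word of associativity moves taking the right comb with the
leaves of `t` to `t`. -/
def CTree.spineWord : CTree → ℕ → List ℕ
  | leaf _, _ => []
  | node t₁ t₂, p => t₁.treeWord p ++ t₂.spineWord (p + 1)

lemma CTree.le_of_mem_treeWord {t : CTree} {p j : ℕ} (h : j ∈ t.treeWord p) : p ≤ j := by
  induction t generalizing p with
  | leaf => simp [treeWord] at h
  | node t₁ t₂ ih₁ ih₂ =>
    simp only [treeWord, List.mem_append, List.mem_singleton] at h
    rcases h with (h | h) | rfl
    · exact ih₁ h
    · have := ih₂ h; omega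
    · exact le_rfl

lemma CTree.le_of_mem_spineWord {t : CTree} {p j : ℕ} (h : j ∈ t.spineWord p) : p ≤ j := by
  induction t generalizing p with
  | leaf => simp [spineWord] at h
  | node t₁ t₂ _ ih₂ =>
    rcases List.mem_append.1 h with h | h
    · exact le_of_mem_treeWord h
    · have := ih₂ h; omega

lemma CTree.treeWord_succ (t : CTree) (p : ℕ) :
    t.treeWord (p + 1) = (t.treeWord p).map (· + 1) := by
  induction t generalizing p with
  | leaf => rfl
  | node t₁ t₂ ih₁ ih₂ => simp [treeWord, ih₁, ih₂]

lemma CTree.spineWord_succ (t : CTree) (p : ℕ) :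
    t.spineWord (p + 1) = (t.spineWord p).map (· + 1) := by
  induction t generalizing p with
  | leaf => rfl
  | node t₁ t₂ _ ih₂ => simp [spineWord, treeWord_succ, ih₂]

variable {M : Type*} [Monoid M] {a : ℕ → M}

lemma mul_prod_map_of_lt (ha : ∀ i j, i < j → a i * a j = a (j + 1) * a i) {p : ℕ}
    {l : List ℕ} (hl : ∀ j ∈ l, p < j) :
    a p * (l.map a).prod = ((l.map (· + 1)).map a).prod * a p := by
  induction l with
  | nil => simp
  | cons j l ih =>
    simp only [List.map_cons, List.prod_cons]
    rw [← mul_assoc, ha p j (hl j List.mem_cons_self), mul_assoc,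
      ih fun k hk => hl k (List.mem_cons_of_mem _ hk), mul_assoc]

lemma prod_spineWord_of_opa_eq_some (ha : ∀ i j, i < j → a i * a j = a (j + 1) * a i)
    {i p : ℕ} {t t' : CTree} (h : opa i t = some t') :
    ((t'.spineWord p).map a).prod = ((t.spineWord p).map a).prod * a (p + i) := by
  induction i generalizing t t' p with
  | zero =>
    obtain ⟨t₁, t₂, t₃, rfl, rfl⟩ := exists_of_opA_eq_some h
    have hcomm := mul_prod_map_of_lt ha fun j hj => (CTree.le_of_mem_spineWord (t := t₃)
      (p := p + 1) hj)
    simp only [CTree.spineWord, CTree.treeWord, List.map_append, List.prod_append,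
      List.map_singleton, List.prod_singleton, Nat.add_zero, CTree.spineWord_succ t₃ (p + 1),
      mul_assoc, hcomm]
  | succ i ih =>
    rcases t with _ | ⟨t₁, t₂⟩
    · simp [opa_succ] at h
    · obtain ⟨t₂', h₂, rfl⟩ := Option.map_eq_some_iff.1 h
      simp only [CTree.spineWord, List.map_append, List.prod_append, ih h₂, mul_assoc,
        show p + 1 + i = p + (i + 1) by omega]

lemma prod_spineWord_of_prod_opa_eq_some (ha : ∀ i j, i < j → a i * a j = a (j + 1) * a i)
    {u : List ℕ} {t t' : CTree} (h : (u.map opa).prod t = some t') :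
    ((t'.spineWord 0).map a).prod = ((t.spineWord 0).map a).prod * (u.map a).prod := by
  induction u generalizing t with
  | nil => cases h; simp
  | cons i u ih =>
    obtain ⟨t₁, h₁, h'⟩ := Option.bind_eq_some_iff.1 h
    rw [ih h', prod_spineWord_of_opa_eq_some ha h₁]
    simp [mul_assoc]

end ThompsonRelations

section Combs

def comb : ℕ → (ℕ → CTree) → CTree
  | 0, _ => leaf 1
  | m + 1, st => node (st 0) (comb m fun n => st (n + 1))

def CTree.spineLength : CTree → ℕ
  | leaf _ => 0
  | node _ t => t.spineLength + 1

def CTree.leaves : CTree → List ℕ+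
  | leaf n => [n]
  | node t₁ t₂ => t₁.leaves ++ t₂.leaves

lemma spineLength_comb (m : ℕ) (st : ℕ → CTree) : (comb m st).spineLength = m := by
  induction m generalizing st with
  | zero => rfl
  | succ m ih => simp [comb, CTree.spineLength, ih]

lemma leaves_comb_leaf (m : ℕ) (f : ℕ → ℕ+) :
    (comb m (leaf ∘ f)).leaves = (List.range m).map f ++ [1] := by
  induction m generalizing f with
  | zero => rfl
  | succ m ih =>
    rw [comb, CTree.leaves, List.range_succ_eq_map, List.map_cons, List.map_map, List.cons_append]
    exact congrArg (f 0 :: ·) (ih fun n => f (n + 1))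

lemma spineWord_comb_leaf (m : ℕ) (f : ℕ → ℕ+) (p : ℕ) : (comb m (leaf ∘ f)).spineWord p = [] := by
  induction m generalizing f p with
  | zero => rfl
  | succ m ih => exact ih (fun n => f (n + 1)) (p + 1)

lemma exists_opa_eq_some {i : ℕ} {t : CTree} (h : i + 2 ≤ t.spineLength) :
    ∃ t', opa i t = some t' ∧ t'.spineLength + 1 = t.spineLength := by
  induction i generalizing t with
  | zero =>
    rcases t with _ | ⟨t₁, _ | ⟨t₂, t₃⟩⟩
    · simp [CTree.spineLength] at h
    · simp [CTree.spineLength] at h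
    · exact ⟨_, rfl, rfl⟩
  | succ i ih =>
    rcases t with _ | ⟨t₁, t₂⟩
    · simp [CTree.spineLength] at h
    · obtain ⟨t₂', h₂, hlen⟩ := ih (t := t₂) (by simp only [CTree.spineLength] at h; omega)
      exact ⟨node t₁ t₂', by simp [opa_succ, h₂], by simp [CTree.spineLength, hlen]⟩

lemma exists_prod_opa_eq_some {u : List ℕ} {t : CTree}
    (h : ∀ i ∈ u, i + 1 + u.length ≤ t.spineLength) : ∃ t', (u.map opa).prod t = some t' := by
  induction u generalizing t with
  | nil => exact ⟨t, rfl⟩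
  | cons i u ih =>
    have hi := h i List.mem_cons_self
    simp only [List.length_cons] at h hi
    obtain ⟨t₁, h₁, hlen⟩ := exists_opa_eq_some (i := i) (t := t) (by omega)
    obtain ⟨t₂, h₂⟩ := ih (t := t₁) fun j hj => by
      have := h j (List.mem_cons_of_mem _ hj); omega
    exact ⟨t₂, by simp [h₁, h₂]⟩

lemma leaves_of_opa_eq_some {i : ℕ} {t t' : CTree} (h : opa i t = some t') :
    t'.leaves = t.leaves := by
  induction i generalizing t t' with
  | zero =>
    obtain ⟨t₁, t₂, t₃, rfl, rfl⟩ := exists_of_opA_eq_some h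
    simp [CTree.leaves]
  | succ i ih =>
    rcases t with _ | ⟨t₁, t₂⟩
    · simp [opa_succ] at h
    · obtain ⟨t₂', h₂, rfl⟩ := Option.map_eq_some_iff.1 h
      simp [CTree.leaves, ih h₂]

lemma leaves_of_prod_opa_eq_some {u : List ℕ} {t t' : CTree}
    (h : (u.map opa).prod t = some t') : t'.leaves = t.leaves := by
  induction u generalizing t with
  | nil => cases h; rfl
  | cons i u ih =>
    obtain ⟨t₁, h₁, h'⟩ := Option.bind_eq_some_iff.1 h
    rw [ih h', leaves_of_opa_eq_some h₁]

lemma swap_succ_apply_succ (i n : ℕ) : swap (i + 1) (i + 1 + 1) (n + 1) = swap i (i + 1) n + 1 := by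
  simp only [swap_apply_def]
  split_ifs <;> omega

lemma ops_comb {i m : ℕ} (st : ℕ → CTree) (h : i + 2 ≤ m) :
    ops i (comb m st) = some (comb m (st ∘ swap i (i + 1))) := by
  induction i generalizing m st with
  | zero =>
    obtain ⟨m, rfl⟩ : ∃ k, m = k + 2 := ⟨m - 2, by omega⟩
    have htail (n : ℕ) : swap 0 (0 + 1) (n + 1 + 1) = n + 1 + 1 :=
      swap_apply_of_ne_of_ne (by omega) (by omega)
    simp only [comb, Function.comp_apply, htail, swap_apply_left, swap_apply_right]
    rfl
  | succ i ih =>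
    obtain ⟨m, rfl⟩ : ∃ k, m = k + 1 := ⟨m - 1, by omega⟩
    have hhead : swap (i + 1) (i + 1 + 1) 0 = 0 := swap_apply_of_ne_of_ne (by omega) (by omega)
    have htail : (fun n => st (swap (i + 1) (i + 1 + 1) (n + 1)))
        = (fun n => st (n + 1)) ∘ swap i (i + 1) := by
      funext n
      simp [swap_succ_apply_succ]
    simp only [comb, ops_succ, onRight_node, ih _ (by omega : i + 2 ≤ m), Option.map_some,
      Function.comp_apply, hhead]
    rw [htail]

lemma prod_ops_comb {σ : List ℕ} {m : ℕ} (st : ℕ → CTree) (h : ∀ i ∈ σ, i + 2 ≤ m) :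
    (σ.map ops).prod (comb m st) = some (comb m (st ∘ swapProd σ)) := by
  induction σ generalizing st with
  | nil => rfl
  | cons i σ ih =>
    simp only [List.map_cons, List.prod_cons, PMap.mul_apply, ops_comb st (h i List.mem_cons_self),
      Option.bind_some, ih _ fun j hj => h j (List.mem_cons_of_mem _ hj), swapProd_cons,
      Perm.coe_mul]
    rfl

end Combs

/-- Evaluating both sides on a long right comb with distinct leaves: the leaf order shows that
the `s`-word is a trivial permutation, and then the common result determines the `a`-words
through `spineWord`. -/
theorem swapProd_eq_one_and_prod_eq_of_nearEq {M : Type*} [Monoid M] {a : ℕ → M}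
    (ha : ∀ i j, i < j → a i * a j = a (j + 1) * a i) {σ u v : List ℕ}
    (h : NearEq ((σ.map ops).prod * (u.map opa).prod) (v.map opa).prod) :
    swapProd σ = 1 ∧ (u.map a).prod = (v.map a).prod := by
  set m := σ.sum + u.sum + v.sum + u.length + v.length + 2
  have hσ : ∀ i ∈ σ, i + 2 ≤ m := fun i hi => by have := List.le_sum_of_mem hi; omega
  have h₁ : (σ.map ops).prod (comb m (leaf ∘ Nat.succPNat))
      = some (comb m (leaf ∘ (Nat.succPNat ∘ swapProd σ))) :=
    prod_ops_comb _ hσ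
  obtain ⟨T, h₂⟩ := exists_prod_opa_eq_some (u := u)
    (t := comb m (leaf ∘ (Nat.succPNat ∘ swapProd σ))) fun i hi => by
      have := List.le_sum_of_mem hi; rw [spineLength_comb]; omega
  obtain ⟨T', h₃⟩ := exists_prod_opa_eq_some (u := v) (t := comb m (leaf ∘ Nat.succPNat))
    fun i hi => by have := List.le_sum_of_mem hi; rw [spineLength_comb]; omega
  obtain rfl : T = T' := by
    have := h.2 (comb m (leaf ∘ Nat.succPNat)) (by simp [h₁, h₂]) (by simp [h₃])
    simpa [h₁, h₂, h₃] using this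
  have hπ : swapProd σ = 1 := by
    have hl := (leaves_of_prod_opa_eq_some h₂).symm.trans (leaves_of_prod_opa_eq_some h₃)
    rw [leaves_comb_leaf, leaves_comb_leaf, List.append_cancel_right_eq, List.map_inj_left] at hl
    ext x
    by_cases hx : x < m
    · simpa using hl x (List.mem_range.2 hx)
    · exact swapProd_apply_of_forall_lt fun j hj => by have := hσ j hj; omega
  refine ⟨hπ, ?_⟩
  rw [hπ] at h₂
  have e₂ := prod_spineWord_of_prod_opa_eq_some ha h₂
  have e₃ := prod_spineWord_of_prod_opa_eq_some ha h₃
  rw [Perm.coe_one, Function.comp_id, spineWord_comb_leaf] at e₂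
  rw [spineWord_comb_leaf] at e₃
  simpa using e₂.symm.trans e₃

section NormalForm

lemma RasRelations.coxeterRelationsA {H : Type*} [Group H] {a s : ℕ → H}
    (h : RasRelations a s) : CoxeterRelationsA s where
  mul_self := h.s_mul_self
  braid := h.braid
  comm hij := by
    obtain ⟨k, rfl⟩ := Nat.exists_eq_add_of_le hij
    exact h.s_mul_s _ k

lemma RasRelations.a_mul_a_of_lt {H : Type*} [Group H] {a s : ℕ → H} (h : RasRelations a s)
    {i j : ℕ} (hij : i < j) : a i * a j = a (j + 1) * a i := by
  obtain ⟨k, rfl⟩ := Nat.exists_eq_add_of_lt hij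
  simpa [Nat.add_right_comm] using h.a_mul_a i k

local notation "P" => PresentedGroup relsas

def pa (n : ℕ) : P := PresentedGroup.of (GenAs.a n)

def ps (n : ℕ) : P := PresentedGroup.of (GenAs.s n)

lemma rasRelations_pa_ps : RasRelations pa ps := by
  refine (forall_lift_relsas_eq_one_iff pa ps).1 fun r hr => ?_
  have : FreeGroup.lift (GenAs.value pa ps) = PresentedGroup.mk relsas :=
    FreeGroup.ext_hom _ _ fun x => by cases x <;> rfl
  rw [this]
  exact PresentedGroup.one_of_mem hr

lemma inv_prod_ps (σ : List ℕ) : ((σ.map ps).prod)⁻¹ = (σ.reverse.map ps).prod := by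
  induction σ with
  | nil => simp
  | cons i σ ih => simp [ih, inv_eq_of_mul_eq_one_right (rasRelations_pa_ps.s_mul_self i)]

lemma exists_pa_mul_ps (j k : ℕ) : ∃ (τ : List ℕ) (j' : ℕ), pa j * ps k = (τ.map ps).prod * pa j' := by
  have h := rasRelations_pa_ps
  rcases lt_or_ge j k with hjk | hkj
  · obtain ⟨m, rfl⟩ := Nat.exists_eq_add_of_le hjk
    exact ⟨[j + 2 + m], j, by simpa using h.a_mul_s j m⟩
  rcases Nat.lt_or_ge (k + 1) j with hkj' | hkj'
  · obtain ⟨m, rfl⟩ := Nat.exists_eq_add_of_le hkj'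
    exact ⟨[k], k + 2 + m, by simpa [Nat.add_right_comm] using (h.s_mul_a k m).symm⟩
  rcases show j = k + 1 ∨ j = k by omega with rfl | rfl
  · exact ⟨[k, k + 1], k, by simpa [mul_assoc] using (h.s_mul_s_succ_mul_a k).symm⟩
  · exact ⟨[j + 1, j], j + 1, by simpa [mul_assoc] using (h.s_succ_mul_s_mul_a_succ j).symm⟩

lemma exists_pa_mul_prod_ps (j : ℕ) (ρ : List ℕ) :
    ∃ (τ : List ℕ) (j' : ℕ), pa j * (ρ.map ps).prod = (τ.map ps).prod * pa j' := by
  induction ρ generalizing j with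
  | nil => exact ⟨[], j, by simp⟩
  | cons k ρ ih =>
    obtain ⟨τ₁, j₁, h₁⟩ := exists_pa_mul_ps j k
    obtain ⟨τ₂, j₂, h₂⟩ := ih j₁
    refine ⟨τ₁ ++ τ₂, j₂, ?_⟩
    rw [List.map_cons, List.prod_cons, ← mul_assoc, h₁, mul_assoc, h₂, List.map_append,
      List.prod_append, mul_assoc]

lemma exists_prod_pa_mul_prod_ps (u ρ : List ℕ) :
    ∃ τ u' : List ℕ, (u.map pa).prod * (ρ.map ps).prod = (τ.map ps).prod * (u'.map pa).prod := by
  induction u generalizing ρ with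
  | nil => exact ⟨ρ, [], by simp⟩
  | cons j u ih =>
    obtain ⟨τ₁, u₁, h₁⟩ := ih ρ
    obtain ⟨τ₂, j₂, h₂⟩ := exists_pa_mul_prod_ps j τ₁
    refine ⟨τ₂, j₂ :: u₁, ?_⟩
    rw [List.map_cons, List.prod_cons, mul_assoc, h₁, ← mul_assoc, h₂, List.map_cons,
      List.prod_cons, mul_assoc]

lemma exists_prod_pa_mul_prod_pa (u : List ℕ) (i : ℕ) :
    ∃ z w : List ℕ, (z.map pa).prod * (u.map pa).prod = (w.map pa).prod * pa i := by
  induction u using List.reverseRecOn generalizing i with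
  | nil => exact ⟨[i], [], by simp⟩
  | append_singleton u j ih =>
    rcases eq_or_ne i j with rfl | hij
    · exact ⟨[], u, by simp⟩
    obtain ⟨p, w₀, hpw⟩ : ∃ (p : ℕ) (w₀ : List ℕ), pa p * pa j = (w₀.map pa).prod * pa i := by
      rcases lt_or_gt_of_ne hij with h | h
      · exact ⟨i, [j + 1], by simpa using rasRelations_pa_ps.a_mul_a_of_lt h⟩
      · exact ⟨i + 1, [j], by simpa using (rasRelations_pa_ps.a_mul_a_of_lt h).symm⟩
    obtain ⟨z, w, h⟩ := ih p
    refine ⟨z, w ++ w₀, ?_⟩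
    simp only [List.map_append, List.prod_append, List.map_singleton, List.prod_singleton,
      ← mul_assoc, h]
    rw [mul_assoc, hpw, mul_assoc]

lemma exists_prod_ps_mul_inv_prod_pa (σ z : List ℕ) :
    ∃ z' σ' : List ℕ,
      (σ.map ps).prod * ((z.map pa).prod)⁻¹ = ((z'.map pa).prod)⁻¹ * (σ'.map ps).prod := by
  obtain ⟨τ, u', h⟩ := exists_prod_pa_mul_prod_ps z σ.reverse
  refine ⟨u', τ.reverse, ?_⟩
  simpa only [mul_inv_rev, inv_prod_ps, List.reverse_reverse] using congrArg (·⁻¹) h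

def normalForms : Set P :=
  {x | ∃ v σ u : List ℕ, x = ((v.map pa).prod)⁻¹ * (σ.map ps).prod * (u.map pa).prod}

lemma mul_pa_mem_normalForms {x : P} (hx : x ∈ normalForms) (i : ℕ) :
    x * pa i ∈ normalForms := by
  obtain ⟨v, σ, u, rfl⟩ := hx
  exact ⟨v, σ, u ++ [i], by simp [mul_assoc]⟩

lemma mul_ps_mem_normalForms {x : P} (hx : x ∈ normalForms) (i : ℕ) :
    x * ps i ∈ normalForms := by
  obtain ⟨v, σ, u, rfl⟩ := hx
  obtain ⟨τ, u', h⟩ := exists_prod_pa_mul_prod_ps u [i]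
  refine ⟨v, σ ++ τ, u', ?_⟩
  simpa [mul_assoc] using congrArg (((v.map pa).prod)⁻¹ * (σ.map ps).prod * ·) h

lemma mul_inv_pa_mem_normalForms {x : P} (hx : x ∈ normalForms) (i : ℕ) :
    x * (pa i)⁻¹ ∈ normalForms := by
  obtain ⟨v, σ, u, rfl⟩ := hx
  obtain ⟨z, w, hzw⟩ := exists_prod_pa_mul_prod_pa u i
  obtain ⟨z', σ', h⟩ := exists_prod_ps_mul_inv_prod_pa σ z
  have h₁ : (u.map pa).prod * (pa i)⁻¹ = ((z.map pa).prod)⁻¹ * (w.map pa).prod := by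
    rw [eq_inv_mul_iff_mul_eq, ← mul_assoc, hzw, mul_inv_cancel_right]
  refine ⟨z' ++ v, σ', w, ?_⟩
  rw [mul_assoc, h₁, ← mul_assoc, mul_assoc _ (σ.map ps).prod, h]
  simp [mul_assoc]

lemma mem_normalForms (x : P) : x ∈ normalForms := by
  have hx : x ∈ Subgroup.closure (Set.range PresentedGroup.of) := by
    rw [PresentedGroup.closure_range_of]; trivial
  induction hx using Subgroup.closure_induction_right with
  | one => exact ⟨[], [], [], by simp⟩
  | mul_right x _ y hy ih =>
    obtain ⟨i | i, rfl⟩ := hy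
    exacts [mul_pa_mem_normalForms ih i, mul_ps_mem_normalForms ih i]
  | mul_inv_cancel x _ y hy ih =>
    obtain ⟨i | i, rfl⟩ := hy
    · exact mul_inv_pa_mem_normalForms ih i
    · change x * (ps i)⁻¹ ∈ normalForms
      rw [inv_eq_of_mul_eq_one_right (rasRelations_pa_ps.s_mul_self i)]
      exact mul_ps_mem_normalForms ih i

end NormalForm

section Injectivity

variable {G : Type*} [Group G] {q : GeoAS →* G}

lemma ReflectsNearEq.presentationHom_injective (hq : ReflectsNearEq q) :
    Function.Injective hq.presentationHom := by
  let geoA (n : ℕ) : GeoAS := ⟨opa n, mema n⟩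
  let geoS (n : ℕ) : GeoAS := ⟨ops n, mems n⟩
  have hA (l : List ℕ) : hq.presentationHom ((l.map pa).prod) = q ((l.map geoA).prod) := by
    simp only [map_list_prod, List.map_map]
    exact congrArg _ (List.map_congr_left fun n _ => hq.presentationHom_of_a n)
  have hS (l : List ℕ) : hq.presentationHom ((l.map ps).prod) = q ((l.map geoS).prod) := by
    simp only [map_list_prod, List.map_map]
    exact congrArg _ (List.map_congr_left fun n _ => hq.presentationHom_of_s n)
  refine (injective_iff_map_eq_one _).2 fun x hx => ?_
  obtain ⟨v, σ, u, rfl⟩ := mem_normalForms x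
  rw [map_mul, map_mul, map_inv, hA, hA, hS, mul_assoc, inv_mul_eq_one, ← map_mul, eq_comm,
    hq] at hx
  simp only [Submonoid.coe_mul, Submonoid.coe_list_prod, List.map_map] at hx
  obtain ⟨hσ, huv⟩ :=
    swapProd_eq_one_and_prod_eq_of_nearEq (fun i j => rasRelations_pa_ps.a_mul_a_of_lt) hx
  rw [rasRelations_pa_ps.coxeterRelationsA.prod_eq_one hσ, huv]
  group

end Injectivity

/-- Proposition 4.5: the group `𝔖• = G(A,S)` — i.e. any group `G` obtained from the
geometry monoid `𝒢(A,S)` by identifying near-equal elements — is generated by the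
families `a` and `s`, and the relations `R_as` completed with `s_i² = 1` make a
presentation of `𝔖•` in terms of the generators `a_i = A_{1^{i-1}}` and
`s_i = S_{1^{i-1}}`. -/
theorem stmt17 (G : Type*) [Group G] (q : GeoAS →* G)
    (hsurj : Function.Surjective q)
    (hiff : ∀ f g : GeoAS, q f = q g ↔ NearEq f.1 g.1) :
    Subgroup.closure
      ({x : G | ∃ n : ℕ, x = q ⟨opa n, mema n⟩ ∨ x = q ⟨ops n, mems n⟩}) = ⊤ ∧
    ∃ iso : PresentedGroup relsas ≃* G,
      ∀ n : ℕ,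
        iso (PresentedGroup.of (GenAs.a n)) = q ⟨opa n, mema n⟩ ∧
        iso (PresentedGroup.of (GenAs.s n)) = q ⟨ops n, mems n⟩ := by
  have hq : ReflectsNearEq q := hiff
  refine ⟨hq.closure_eq_top hsurj, MulEquiv.ofBijective hq.presentationHom
    ⟨hq.presentationHom_injective, hq.presentationHom_surjective hsurj⟩, fun n => ?_⟩
  exact ⟨hq.presentationHom_of_a n, hq.presentationHom_of_s n⟩
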